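/- arXiv:math/0312109 — 4 statements merged into one kernel-verified Lean document; each statement's English description precedes it below -/
import Mathlib

section
/- Let X be a second countable locally compact Hausdorff space, let U be an open subset of X, and let f be a continuous function on X vanishing at infinity. Then the restriction of f to U vanishes at infinity (as a function on U) if and only if f vanishes identically on the boundary of U (where the boundary of U is the intersection of the closure of U with the closure of X \ U). -/
/-- For a second countable locally compact Hausdorff space `X`, an open set
`U ⊆ X`, and `f ∈ C₀(X)`, the restriction of `f` to `U` vanishes at infinity (as a
function on `U`) iff `f` vanishes on the boundary `closure U ∩ closure Uᶜ` of `U`. -/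
theorem stmt0 {X : Type*} [TopologicalSpace X] [SecondCountableTopology X]
    [LocallyCompactSpace X] [T2Space X] (U : Set X) (hU : IsOpen U) (f : X → ℂ)
    (hf : Continuous f) (hf0 : ∀ ε : ℝ, 0 < ε → IsCompact {x : X | ε ≤ ‖f x‖}) :
    (∀ ε : ℝ, 0 < ε → IsCompact {x : U | ε ≤ ‖f (x : X)‖}) ↔
      ∀ x ∈ closure U ∩ closure Uᶜ, f x = 0 := by
  constructor
  · intro h x hx
    obtain ⟨hxU, hxUc⟩ := hx
    by_contra hfx
    have hε : (0:ℝ) < ‖f x‖ / 2 := by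
      have : 0 < ‖f x‖ := norm_pos_iff.mpr hfx
      linarith
    set K : Set X := Subtype.val '' {y : U | ‖f x‖ / 2 ≤ ‖f (y : X)‖} with hKdef
    have hK : IsCompact K := (h _ hε).image continuous_subtype_val
    have hxK : x ∈ closure K := by
      rw [mem_closure_iff]
      intro W hW hxW
      have hV : IsOpen (W ∩ {y | ‖f x‖ / 2 < ‖f y‖}) :=
        hW.inter (isOpen_lt continuous_const hf.norm)
      have hxV : x ∈ W ∩ {y | ‖f x‖ / 2 < ‖f y‖} := ⟨hxW, by simpa using hfx⟩
      obtain ⟨y, hy⟩ := mem_closure_iff.mp hxU _ hV hxV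
      refine ⟨y, hy.1.1, ⟨⟨y, hy.2⟩, ?_, rfl⟩⟩
      simpa using le_of_lt hy.1.2
    have hxU' : x ∈ U := by
      have : x ∈ K := by rwa [hK.isClosed.closure_eq] at hxK
      obtain ⟨y, _, rfl⟩ := this
      exact y.2
    obtain ⟨z, hz⟩ := mem_closure_iff.mp hxUc U hU hxU'
    exact hz.2 hz.1
  · intro h ε hε
    have hS : IsCompact (closure U ∩ {y | ε ≤ ‖f y‖}) :=
      (hf0 ε hε).inter_left isClosed_closure
    have himg : Subtype.val '' {y : U | ε ≤ ‖f (y : X)‖} = closure U ∩ {y | ε ≤ ‖f y‖} := by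
      ext y
      constructor
      · rintro ⟨⟨y, hyU⟩, hy, rfl⟩
        exact ⟨subset_closure hyU, hy⟩
      · rintro ⟨hyc, hy⟩
        by_cases hyU : y ∈ U
        · exact ⟨⟨y, hyU⟩, hy, rfl⟩
        · exact absurd (h y ⟨hyc, subset_closure hyU⟩)
            (fun h0 => by simp [h0] at hy; linarith)
    rw [Topology.IsEmbedding.subtypeVal.isCompact_iff, himg]
    exact hS
end

section
/- Let W be a locally compact Hausdorff space, let h : W → W be a homeomorphism, and let n ≥ 1. Suppose every point v ∈ W satisfies hⁿ(v) = v and hᵏ(v) ≠ v for all k ∈ {1, …, n−1}. Then there exists a nonempty open subset U of W such that the sets U, h(U), h²(U), …, h^{n−1}(U) are pairwise disjoint. -/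
/-- If `h` is a homeomorphism of a nonempty locally compact Hausdorff space
`W` with `hⁿ = id` and `hᵏ(v) ≠ v` for all `v` and `1 ≤ k ≤ n-1`, then there is a
nonempty open set `U` whose iterates `U, h(U), …, h^{n-1}(U)` are pairwise disjoint. -/
theorem stmt2 {W : Type*} [TopologicalSpace W] [LocallyCompactSpace W] [T2Space W]
    [Nonempty W] (h : W ≃ₜ W) (n : ℕ) (hn : 1 ≤ n)
    (hper : ∀ v : W, (⇑h)^[n] v = v)
    (hfree : ∀ v : W, ∀ k : ℕ, 1 ≤ k → k < n → (⇑h)^[k] v ≠ v) :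
    ∃ U : Set W, U.Nonempty ∧ IsOpen U ∧
      ∀ i j : ℕ, i < n → j < n → i ≠ j → Disjoint ((⇑h)^[i] '' U) ((⇑h)^[j] '' U) := by
  obtain ⟨v⟩ := ‹Nonempty W›
  -- points of the orbit
  have hne : ∀ i j : ℕ, i < n → j < n → i ≠ j → (⇑h)^[i] v ≠ (⇑h)^[j] v := by
    have key : ∀ i j : ℕ, i < j → j < n → (⇑h)^[i] v ≠ (⇑h)^[j] v := by
      intro i j hij hjn heq
      have : (⇑h)^[j - i] ((⇑h)^[i] v) = (⇑h)^[i] v := by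
        rw [← Function.iterate_add_apply, Nat.sub_add_cancel hij.le, heq]
      exact hfree _ (j - i) (by omega) (by omega) this
    intro i j hi hj hij heq
    rcases lt_or_gt_of_ne hij with hlt | hlt
    · exact key i j hlt hj heq
    · exact key j i hlt hi heq.symm
  set s : Set W := (fun i => (⇑h)^[i] v) '' (Set.Iio n) with hs
  have hsfin : s.Finite := (Set.finite_Iio n).image _
  obtain ⟨V, hV, hVd⟩ := hsfin.t2_separation
  refine ⟨⋂ i ∈ Set.Iio n, (⇑h)^[i] ⁻¹' V ((⇑h)^[i] v), ⟨v, ?_⟩, ?_, ?_⟩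
  · simp only [Set.mem_iInter]
    intro i _
    exact (hV _).1
  · refine (Set.finite_Iio n).isOpen_biInter fun i _ => ?_
    exact (hV _).2.preimage (by
      have : Continuous (⇑h) := h.continuous
      exact this.iterate i)
  · intro i j hi hj hij
    have h1 : (⇑h)^[i] '' (⋂ k ∈ Set.Iio n, (⇑h)^[k] ⁻¹' V ((⇑h)^[k] v)) ⊆ V ((⇑h)^[i] v) := by
      rintro x ⟨y, hy, rfl⟩
      simp only [Set.mem_iInter] at hy
      exact hy i hi
    have h2 : (⇑h)^[j] '' (⋂ k ∈ Set.Iio n, (⇑h)^[k] ⁻¹' V ((⇑h)^[k] v)) ⊆ V ((⇑h)^[j] v) := by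
      rintro x ⟨y, hy, rfl⟩
      simp only [Set.mem_iInter] at hy
      exact hy j hj
    have hd : Disjoint (V ((⇑h)^[i] v)) (V ((⇑h)^[j] v)) :=
      hVd (Set.mem_image_of_mem _ hi) (Set.mem_image_of_mem _ hj) (hne i j hi hj hij)
    exact hd.mono h1 h2
end

section
/- Let E⁰, E¹ be second countable locally compact Hausdorff spaces, r : E¹ → E⁰ continuous and open, s : E¹ → E⁰ continuous. Let U be an open subset of E⁰, and suppose v ∈ E⁰ has the properties: (a) there is a neighborhood V of v such that s⁻¹(closure(V)) is compact, and (b) v ∈ closure(s(E¹)). Suppose further that for every neighborhood W of v there exists β ∈ s⁻¹(W) with r(β) ∉ U, and v ∉ U. Then there exists α ∈ E¹ with s(α) = v and r(α) ∉ U. -/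
/-- Let `U ⊆ E⁰` be open and `v ∈ E⁰` a vertex with a neighborhood `V`
such that `s⁻¹(closure V)` is compact, and with `v ∈ closure (s(E¹))`.  If every
neighborhood `W` of `v` contains the source of an edge whose range is not in `U`, and
`v ∉ U`, then there is an edge `α` with `s(α) = v` and `r(α) ∉ U`. -/
theorem stmt16 {E₀ E₁ : Type*} [TopologicalSpace E₀] [TopologicalSpace E₁]
    [SecondCountableTopology E₀] [SecondCountableTopology E₁]
    [LocallyCompactSpace E₀] [LocallyCompactSpace E₁] [T2Space E₀] [T2Space E₁]
    (r s : E₁ → E₀) (hr : Continuous r) (hro : IsOpenMap r) (hs : Continuous s)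
    (U : Set E₀) (hU : IsOpen U) (v : E₀)
    (V : Set E₀) (hV : V ∈ nhds v) (hcomp : IsCompact (s ⁻¹' closure V))
    (hvs : v ∈ closure (Set.range s))
    (happrox : ∀ W ∈ nhds v, ∃ β : E₁, s β ∈ W ∧ r β ∉ U)
    (hvU : v ∉ U) :
    ∃ α : E₁, s α = v ∧ r α ∉ U := by
  set K : Set E₁ := s ⁻¹' closure V ∩ r ⁻¹' Uᶜ with hK
  have hKcomp : IsCompact K :=
    hcomp.inter_right ((hU.isClosed_compl).preimage hr)
  have hclosed : IsClosed (s '' K) := (hKcomp.image hs).isClosed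
  have hvcl : v ∈ closure (s '' K) := by
    rw [mem_closure_iff_nhds]
    intro W hW
    obtain ⟨β, hβW, hβU⟩ := happrox (W ∩ V) (Filter.inter_mem hW hV)
    exact ⟨s β, hβW.1, β, ⟨subset_closure hβW.2, hβU⟩, rfl⟩
  rw [hclosed.closure_eq] at hvcl
  obtain ⟨α, ⟨_, hαU⟩, hαv⟩ := hvcl
  exact ⟨α, hαv, hαU⟩
end

section
/- Let Q be a topological quiver and define for each n ≥ 1 the set Lₙ of base points of loops of length n with no exits, and Lₙˢ = Lₙ \ (L₁ ∪ ⋯ ∪ Lₙ₋₁) the base points of simple loops of length n with no exits. Then L∞ := ∪ₙ Lₙ has empty interior if and only if Lₙˢ has empty interior for all n. -/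
/-- A finite path in a topological quiver: a sequence of `n+1` edges in which the range
of each edge equals the source of the next. -/
structure QPath {E₀ E₁ : Type*} (r s : E₁ → E₀) where
  n : ℕ
  edges : Fin (n + 1) → E₁
  chain : ∀ i : Fin n, r (edges i.castSucc) = s (edges i.succ)

variable {E₀ E₁ : Type*}

/-- `p` is a loop based at `v`. -/
def QPath.IsLoopAt {r s : E₁ → E₀} (p : QPath r s) (v : E₀) : Prop :=
  s (p.edges 0) = v ∧ r (p.edges (Fin.last p.n)) = v

/-- `p` has no exits: any edge with the same source as an edge of `p` is that edge. -/
def QPath.NoExit {r s : E₁ → E₀} (p : QPath r s) : Prop :=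
  ∀ (β : E₁) (k : Fin (p.n + 1)), s β = s (p.edges k) → β = p.edges k

/-- `LBase r s n` is the set of base points of loops of length `n` with no exits. -/
def LBase (r s : E₁ → E₀) (n : ℕ) : Set E₀ :=
  {v | ∃ p : QPath r s, p.n + 1 = n ∧ p.IsLoopAt v ∧ p.NoExit}

/-!
A vertex of `L∞` has exactly one outgoing edge, and by following these edges around two
no-exit loops one sees that an edge with source in `L∞` is determined by its range. On the open
set `V = interior L∞`, which `r ∘ s⁻¹` maps into itself, stepping back along the unique incoming
edge is therefore a well-defined map `prevVertex`, continuous because `r` is open, and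
`Lₙ ∩ V` is the closed set of its points of period `n`. If `V ≠ ∅`, the locally compact open set
`V` is a Baire space covered by these closed sets, and for the least `n` for which `Lₙ ∩ V` has
interior in `V`, removing the nowhere dense `L₁ ∪ ⋯ ∪ Lₙ₋₁` leaves an open subset of `Lₙˢ`.
-/

open Set Function

section Baire

variable {X : Type*} [TopologicalSpace X]

lemma interior_biUnion_lt_eq_empty {A : ℕ → Set X} (hc : ∀ k, IsClosed (A k)) {n : ℕ}
    (h : ∀ k < n, interior (A k) = ∅) : interior (⋃ k < n, A k) = ∅ := by
  induction n with
  | zero => simp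
  | succ n ih =>
    rw [biUnion_lt_succ, union_comm, interior_union_isClosed_of_interior_empty (hc n)
      (ih fun k hk => h k (Nat.lt_succ_of_lt hk)), h n n.lt_succ_self]

/-- Take `n` least with `interior (A n)` nonempty; the earlier `A k` are closed with empty
interior, so removing them leaves a nonempty interior. -/
lemma BaireSpace.exists_nonempty_interior_diff_biUnion [BaireSpace X] [Nonempty X]
    {A : ℕ → Set X} (hc : ∀ n, IsClosed (A n)) (hU : ⋃ n, A n = univ) :
    ∃ n, (interior (A n \ ⋃ k < n, A k)).Nonempty := by
  classical
  have hex : ∃ n, (interior (A n)).Nonempty := nonempty_interior_of_iUnion_of_closed hc hU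
  refine ⟨Nat.find hex, ?_⟩
  have hsmall : interior (⋃ k < Nat.find hex, A k) = ∅ :=
    interior_biUnion_lt_eq_empty hc fun k hk => not_nonempty_iff_eq_empty.1 (Nat.find_min hex hk)
  have hclosed : IsClosed (⋃ k < Nat.find hex, A k) :=
    (finite_lt_nat _).isClosed_biUnion fun k _ => hc k
  rw [sdiff_eq, interior_inter, hclosed.isOpen_compl.interior_eq]
  exact (interior_eq_empty_iff_dense_compl.1 hsmall).inter_open_nonempty _ isOpen_interior
    (Nat.find_spec hex)

lemma IsOpen.exists_nonempty_interior_diff_biUnion [LocallyCompactSpace X] [R1Space X]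
    {V : Set X} (hV : IsOpen V) (hne : V.Nonempty) {A : ℕ → Set X}
    (hc : ∀ n, IsClosed ((↑) ⁻¹' A n : Set V)) (hcov : V ⊆ ⋃ n, A n) :
    ∃ n, (interior (A n \ ⋃ k < n, A k)).Nonempty := by
  have := hV.locallyCompactSpace
  have := hne.to_subtype
  obtain ⟨n, x, hx⟩ := BaireSpace.exists_nonempty_interior_diff_biUnion hc
    (eq_univ_of_forall fun x => by simpa using hcov x.2)
  refine ⟨n, x, interior_maximal ?_ (hV.isOpenMap_subtype_val _ isOpen_interior) ⟨x, hx, rfl⟩⟩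
  rintro _ ⟨y, hy, rfl⟩
  simpa using interior_subset hy

end Baire

/-- Loops are handled as periodic infinite walks: a no-exit loop of length `n + 1` is an
`(n + 1)`-periodic `IsNoExitWalk` (`mem_LBase_succ_iff`). -/
structure IsNoExitWalk (r s : E₁ → E₀) (e : ℕ → E₁) : Prop where
  chain : ∀ i, r (e i) = s (e (i + 1))
  noExit : ∀ i β, s β = s (e i) → β = e i

namespace IsNoExitWalk

variable {r s : E₁ → E₀} {e e' : ℕ → E₁}

lemma shift (he : IsNoExitWalk r s e) (k : ℕ) : IsNoExitWalk r s (fun i => e (i + k)) where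
  chain i := by simpa only [add_right_comm] using he.chain (i + k)
  noExit i := he.noExit (i + k)

lemma eq_of_source_eq (he : IsNoExitWalk r s e) (he' : IsNoExitWalk r s e')
    (h : s (e' 0) = s (e 0)) : e' = e := by
  funext i
  induction i with
  | zero => exact he.noExit 0 _ h
  | succ i ih => exact he.noExit (i + 1) _ (by rw [← he.chain, ← he'.chain, ih])

lemma periodic (he : IsNoExitWalk r s e) {n : ℕ} (hn : s (e n) = s (e 0)) : Periodic e n :=
  congrFun (he.eq_of_source_eq (he.shift n) (by rwa [zero_add]))

end IsNoExitWalk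

section Loops

variable {r s : E₁ → E₀}

open Fin.NatCast in
lemma mem_LBase_succ_iff {v : E₀} {n : ℕ} :
    v ∈ LBase r s (n + 1) ↔
      ∃ e, IsNoExitWalk r s e ∧ Periodic e (n + 1) ∧ s (e 0) = v := by
  constructor
  · rintro ⟨⟨m, edges, chain⟩, hm, hloop, hnoExit⟩
    obtain rfl : n = m := (Nat.succ_injective hm).symm
    refine ⟨fun i => edges (i : Fin (n + 1)), ⟨fun i => ?_, fun i β => hnoExit β _⟩,
      fun i => by simp [Nat.cast_add], by simpa using hloop.1⟩
    rw [Nat.cast_add_one]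
    rcases eq_or_ne (i : Fin (n + 1)) (Fin.last n) with hi | hi
    · rw [hi, Fin.last_add_one]
      exact hloop.2.trans hloop.1.symm
    · obtain ⟨j, hj⟩ := Fin.exists_castSucc_eq.mpr hi
      rw [← hj, Fin.coeSucc_eq_succ]
      exact chain j
  · rintro ⟨e, he, hper, rfl⟩
    refine ⟨⟨n, fun k => e k, fun i => he.chain i⟩, rfl, ⟨rfl, ?_⟩, fun β k => he.noExit k β⟩
    show r (e n) = s (e 0)
    rw [he.chain, hper.eq]

lemma LBase_zero : LBase r s 0 = ∅ :=
  eq_empty_of_forall_notMem fun _ ⟨_, h, _⟩ => Nat.succ_ne_zero _ h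

lemma IsNoExitWalk.s_mem_LBase {e : ℕ → E₁} (he : IsNoExitWalk r s e) {n : ℕ}
    (hper : Periodic e (n + 1)) (i : ℕ) : s (e i) ∈ LBase r s (n + 1) :=
  mem_LBase_succ_iff.2 ⟨_, he.shift i, hper.add_const i, by rw [zero_add]⟩

def LInf (r s : E₁ → E₀) : Set E₀ := ⋃ n, LBase r s n

lemma mem_LInf_iff {v : E₀} :
    v ∈ LInf r s ↔ ∃ e n, IsNoExitWalk r s e ∧ Periodic e (n + 1) ∧ s (e 0) = v := by
  refine ⟨fun hv => ?_, fun ⟨e, n, h⟩ => mem_iUnion.2 ⟨n + 1, mem_LBase_succ_iff.2 ⟨e, h⟩⟩⟩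
  obtain ⟨_ | n, hv⟩ := mem_iUnion.1 hv
  · simp [LBase_zero] at hv
  · obtain ⟨e, h⟩ := mem_LBase_succ_iff.1 hv
    exact ⟨e, n, h⟩

lemma eq_of_s_eq_of_s_mem_LInf {β β' : E₁} (hβ : s β ∈ LInf r s) (h : s β' = s β) : β' = β := by
  obtain ⟨e, -, he, -, he0⟩ := mem_LInf_iff.1 hβ
  rw [he.noExit 0 β he0.symm, he.noExit 0 β' (h.trans he0.symm)]

lemma r_mem_LInf_of_s_mem {β : E₁} (hβ : s β ∈ LInf r s) : r β ∈ LInf r s := by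
  obtain ⟨e, n, he, hper, he0⟩ := mem_LInf_iff.1 hβ
  rw [he.noExit 0 β he0.symm, he.chain]
  exact mem_iUnion.2 ⟨n + 1, he.s_mem_LBase hper 1⟩

/-- Two no-exit loops through `r β = r β'` follow the same edges from there on, so they
agree a common multiple of their lengths later, where they are back at `β` and `β'`. -/
lemma eq_of_r_eq_of_s_mem_LInf {β β' : E₁} (hβ : s β ∈ LInf r s) (hβ' : s β' ∈ LInf r s)
    (h : r β = r β') : β = β' := by
  obtain ⟨e, a, he, hper, he0⟩ := mem_LInf_iff.1 hβ
  obtain ⟨e', b, he', hper', he0'⟩ := mem_LInf_iff.1 hβ'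
  rw [he.noExit 0 β he0.symm, he'.noExit 0 β' he0'.symm] at h ⊢
  have hsame : (fun i => e (i + 1)) = fun i => e' (i + 1) :=
    (he'.shift 1).eq_of_source_eq (he.shift 1)
      (by simp only [zero_add, ← he.chain, ← he'.chain, h])
  calc e 0 = e ((b + 1) * (a + 1)) := (hper.nat_mul_eq _).symm
    _ = e' ((a + 1) * (b + 1)) := by
      rw [show (b + 1) * (a + 1) = b * (a + 1) + a + 1 by ring,
        show (a + 1) * (b + 1) = b * (a + 1) + a + 1 by ring]
      exact congrFun hsame _
    _ = e' 0 := hper'.nat_mul_eq _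

section Topology

variable [TopologicalSpace E₀]

/-- Well defined by `eq_of_r_eq_of_s_mem_LInf`; the junk value `v` is only taken outside
`interior (LInf r s)`. -/
noncomputable def prevVertex (r s : E₁ → E₀) (v : E₀) : E₀ :=
  open Classical in
  if h : ∃ β, s β ∈ interior (LInf r s) ∧ r β = v then s h.choose else v

lemma prevVertex_r {β : E₁} (hβ : s β ∈ interior (LInf r s)) : prevVertex r s (r β) = s β := by
  have h : ∃ β', s β' ∈ interior (LInf r s) ∧ r β' = r β := ⟨β, hβ, rfl⟩
  rw [prevVertex, dif_pos h]
  exact congrArg s (eq_of_r_eq_of_s_mem_LInf (interior_subset h.choose_spec.1)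
    (interior_subset hβ) h.choose_spec.2)

variable [TopologicalSpace E₁]

lemma r_mem_interior_LInf (hro : IsOpenMap r) (hs : Continuous s) {β : E₁}
    (hβ : s β ∈ interior (LInf r s)) : r β ∈ interior (LInf r s) := by
  refine interior_maximal ?_ (hro _ (isOpen_interior.preimage hs)) (mem_image_of_mem r hβ)
  rintro _ ⟨β', hβ', rfl⟩
  exact r_mem_LInf_of_s_mem (interior_subset hβ')

lemma IsNoExitWalk.s_mem_interior_LInf (hro : IsOpenMap r) (hs : Continuous s) {e : ℕ → E₁}
    (he : IsNoExitWalk r s e) (h0 : s (e 0) ∈ interior (LInf r s)) (i : ℕ) :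
    s (e i) ∈ interior (LInf r s) := by
  induction i with
  | zero => exact h0
  | succ i ih => exact he.chain i ▸ r_mem_interior_LInf hro hs ih

lemma exists_r_eq_of_mem_interior_LInf (hro : IsOpenMap r) (hs : Continuous s) {v : E₀}
    (hv : v ∈ interior (LInf r s)) : ∃ β, s β ∈ interior (LInf r s) ∧ r β = v := by
  obtain ⟨e, n, he, hper, rfl⟩ := mem_LInf_iff.1 (interior_subset hv)
  refine ⟨e n, he.s_mem_interior_LInf hro hs hv n, ?_⟩
  rw [he.chain, hper.eq]

lemma mapsTo_prevVertex (hro : IsOpenMap r) (hs : Continuous s) :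
    MapsTo (prevVertex r s) (interior (LInf r s)) (interior (LInf r s)) := fun _ hv => by
  obtain ⟨β, hβ, rfl⟩ := exists_r_eq_of_mem_interior_LInf hro hs hv
  rwa [prevVertex_r hβ]

/-- With `V = interior (LInf r s)`, `V ∩ prevVertex⁻¹' U = r '' (s⁻¹' (V ∩ U))`, which is open
since `r` is. -/
lemma continuousOn_prevVertex (hro : IsOpenMap r) (hs : Continuous s) :
    ContinuousOn (prevVertex r s) (interior (LInf r s)) := by
  refine (continuousOn_open_iff isOpen_interior).2 fun U hU => ?_
  convert hro _ ((isOpen_interior.inter hU).preimage hs) using 1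
  ext v
  constructor
  · rintro ⟨hv, hvU⟩
    obtain ⟨β, hβ, rfl⟩ := exists_r_eq_of_mem_interior_LInf hro hs hv
    exact ⟨β, ⟨hβ, by rwa [mem_preimage, prevVertex_r hβ] at hvU⟩, rfl⟩
  · rintro ⟨β, ⟨hβ, hβU⟩, rfl⟩
    exact ⟨r_mem_interior_LInf hro hs hβ, by rwa [mem_preimage, prevVertex_r hβ]⟩

lemma isPeriodicPt_prevVertex_of_mem_LBase (hro : IsOpenMap r) (hs : Continuous s) {v : E₀}
    {n : ℕ} (hv : v ∈ interior (LInf r s)) (hvn : v ∈ LBase r s (n + 1)) :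
    IsPeriodicPt (prevVertex r s) (n + 1) v := by
  obtain ⟨e, he, hper, rfl⟩ := mem_LBase_succ_iff.1 hvn
  have hback : ∀ k, (prevVertex r s)^[k] (s (e k)) = s (e 0) := by
    intro k
    induction k with
    | zero => rfl
    | succ k ih =>
      rw [iterate_succ_apply, ← he.chain, prevVertex_r (he.s_mem_interior_LInf hro hs hv k), ih]
  show (prevVertex r s)^[n + 1] (s (e 0)) = s (e 0)
  simpa only [hper.eq] using hback (n + 1)

lemma mem_LBase_of_isPeriodicPt_prevVertex (hro : IsOpenMap r) (hs : Continuous s) {v : E₀}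
    {n : ℕ} (hv : v ∈ interior (LInf r s)) (hper : IsPeriodicPt (prevVertex r s) (n + 1) v) :
    v ∈ LBase r s (n + 1) := by
  choose e he using fun i =>
    exists_r_eq_of_mem_interior_LInf hro hs ((mapsTo_prevVertex hro hs).iterate (n * (i + 1)) hv)
  -- `prevVertex` steps back along the walk, and `prevVertex^[n]` steps forward along the orbit.
  have hse : ∀ i, s (e i) = (prevVertex r s)^[n * i] v := fun i => by
    rw [← prevVertex_r (he i).1, (he i).2, ← iterate_succ_apply' (prevVertex r s),
      show (n * (i + 1)).succ = n * i + (n + 1) by rw [Nat.succ_eq_add_one]; ring,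
      iterate_add_apply, hper.eq]
  have hwalk : IsNoExitWalk r s e :=
    ⟨fun i => by rw [(he i).2, hse],
      fun i _ => eq_of_s_eq_of_s_mem_LInf (interior_subset (he i).1)⟩
  have hstart : s (e 0) = v := by rw [hse, mul_zero, iterate_zero_apply]
  refine mem_LBase_succ_iff.2 ⟨e, hwalk, hwalk.periodic ?_, hstart⟩
  rw [hstart, hse]
  exact (hper.const_mul n).eq

lemma isClosed_preimage_LBase [T2Space E₀] (hro : IsOpenMap r) (hs : Continuous s) (n : ℕ) :
    IsClosed ((↑) ⁻¹' LBase r s n : Set (interior (LInf r s))) := by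
  cases n with
  | zero => simp [LBase_zero]
  | succ n =>
    have hfix : ((↑) ⁻¹' LBase r s (n + 1) : Set (interior (LInf r s))) =
        {x : interior (LInf r s) | (prevVertex r s)^[n + 1] x = x} :=
      ext fun x => ⟨isPeriodicPt_prevVertex_of_mem_LBase hro hs x.2,
        mem_LBase_of_isPeriodicPt_prevVertex hro hs x.2⟩
    rw [hfix]
    exact isClosed_eq (((continuousOn_prevVertex hro hs).iterate
      (mapsTo_prevVertex hro hs) (n + 1)).domRestrict) continuous_subtype_val

end Topology

end Loops

theorem stmt18_general [TopologicalSpace E₀] [TopologicalSpace E₁]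
    [LocallyCompactSpace E₀] [T2Space E₀]
    (r s : E₁ → E₀) (hro : IsOpenMap r) (hs : Continuous s) :
    interior (⋃ n, LBase r s n) = ∅ ↔
      ∀ n : ℕ, interior (LBase r s n \ ⋃ k ∈ Set.Ico 1 n, LBase r s k) = ∅ := by
  refine ⟨fun h n => subset_empty_iff.1 (h ▸ interior_mono (sdiff_subset.trans
    (subset_iUnion _ n))), fun h => ?_⟩
  by_contra hne
  obtain ⟨n, hn⟩ := isOpen_interior.exists_nonempty_interior_diff_biUnion
    (nonempty_iff_ne_empty.2 hne) (isClosed_preimage_LBase hro hs) interior_subset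
  refine hn.ne_empty (subset_empty_iff.1 (h n ▸ interior_mono (sdiff_subset_sdiff_right ?_)))
  exact biUnion_subset_biUnion_left fun k hk => hk.2

/-- `L∞ = ⋃ₙ Lₙ` has empty interior iff each
`Lₙˢ = Lₙ \ (L₁ ∪ ⋯ ∪ Lₙ₋₁)` has empty interior. -/
theorem stmt18 [TopologicalSpace E₀] [TopologicalSpace E₁]
    [SecondCountableTopology E₀] [SecondCountableTopology E₁]
    [LocallyCompactSpace E₀] [LocallyCompactSpace E₁] [T2Space E₀] [T2Space E₁]
    (r s : E₁ → E₀) (hr : Continuous r) (hro : IsOpenMap r) (hs : Continuous s) :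
    interior (⋃ n, LBase r s n) = ∅ ↔
      ∀ n : ℕ, interior (LBase r s n \ ⋃ k ∈ Set.Ico 1 n, LBase r s k) = ∅ :=
  stmt18_general r s hro hs
end
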